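/- arXiv:2008.07222 — 6 statements merged into one kernel-verified Lean document; each statement's English description precedes it below -/
import Mathlib

section
/- Let X be a conformally Hamiltonian vector field on a 2n-dimensional symplectic manifold (P, Ω), i.e. i_X Ω = N dH with N > 0. Then the volume form μ = N^{-1} Ω^n is invariant under the flow of X, i.e. £_X μ = 0. -/
open scoped RealInnerProductSpace

/-- The canonical symplectic form on `ℝ^n × ℝ^n`. -/
noncomputable def OmegaForm {n : ℕ}
    (u v : EuclideanSpace ℝ (Fin n) × EuclideanSpace ℝ (Fin n)) : ℝ :=
  ⟪u.1, v.2⟫ - ⟪u.2, v.1⟫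

lemma omega_key {n : ℕ}
    (X : EuclideanSpace ℝ (Fin n) × EuclideanSpace ℝ (Fin n) →
      EuclideanSpace ℝ (Fin n) × EuclideanSpace ℝ (Fin n))
    (H N : EuclideanSpace ℝ (Fin n) × EuclideanSpace ℝ (Fin n) → ℝ)
    (hX : ContDiff ℝ (⊤ : ℕ∞) X) (hH : ContDiff ℝ (⊤ : ℕ∞) H) (hN : ContDiff ℝ (⊤ : ℕ∞) N)
    (hconf : ∀ z v, OmegaForm (X z) v = N z * fderiv ℝ H z v)
    (z w v : EuclideanSpace ℝ (Fin n) × EuclideanSpace ℝ (Fin n)) :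
    OmegaForm (fderiv ℝ X z w) v =
      N z * fderiv ℝ (fderiv ℝ H) z w v + fderiv ℝ H z v * fderiv ℝ N z w := by
  let E := EuclideanSpace ℝ (Fin n)
  let L : (E × E) →L[ℝ] ℝ :=
    ((innerSL ℝ v.2).comp (ContinuousLinearMap.fst ℝ E E)) -
      ((innerSL ℝ v.1).comp (ContinuousLinearMap.snd ℝ E E))
  have hLapp : ∀ u : E × E, L u = OmegaForm u v := by
    intro u
    simp only [L, ContinuousLinearMap.sub_apply, ContinuousLinearMap.comp_apply,
      ContinuousLinearMap.coe_fst', ContinuousLinearMap.coe_snd', innerSL_apply_apply, OmegaForm]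
    rw [real_inner_comm v.2, real_inner_comm v.1]
  have h1 : HasFDerivAt (fun z => L (X z)) (L.comp (fderiv ℝ X z)) z :=
    L.hasFDerivAt.comp z (hX.differentiable (by simp) z).hasFDerivAt
  have hdH : DifferentiableAt ℝ (fderiv ℝ H) z :=
    ((hH.fderiv_right (m := 1) (WithTop.coe_le_coe.mpr le_top)).differentiable (by simp)) z
  have hg : HasFDerivAt (fun z => fderiv ℝ H z v)
      ((ContinuousLinearMap.apply ℝ ℝ v).comp (fderiv ℝ (fderiv ℝ H) z)) z :=
    (ContinuousLinearMap.apply ℝ ℝ v).hasFDerivAt.comp z hdH.hasFDerivAt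
  have hN' : HasFDerivAt N (fderiv ℝ N z) z :=
    (hN.differentiable (by simp) z).hasFDerivAt
  have h2 : HasFDerivAt (fun z => N z * fderiv ℝ H z v)
      (N z • ((ContinuousLinearMap.apply ℝ ℝ v).comp (fderiv ℝ (fderiv ℝ H) z)) +
        fderiv ℝ H z v • fderiv ℝ N z) z := hN'.mul hg
  have heq : (fun z => L (X z)) = fun z => N z * fderiv ℝ H z v := by
    funext y
    rw [hLapp (X y), hconf y v]
  rw [heq] at h1
  have := h1.unique h2
  calc OmegaForm (fderiv ℝ X z w) v = (L.comp (fderiv ℝ X z)) w := by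
        rw [ContinuousLinearMap.comp_apply, hLapp]
    _ = (N z • ((ContinuousLinearMap.apply ℝ ℝ v).comp (fderiv ℝ (fderiv ℝ H) z)) +
        fderiv ℝ H z v • fderiv ℝ N z) w := by rw [this]
    _ = _ := by simp
lemma trace_formula {n : ℕ}
    (A : (EuclideanSpace ℝ (Fin n) × EuclideanSpace ℝ (Fin n)) →ₗ[ℝ]
         (EuclideanSpace ℝ (Fin n) × EuclideanSpace ℝ (Fin n))) :
    LinearMap.trace ℝ _ A =
      (∑ i, (A (EuclideanSpace.single i 1, 0)).1 i) +
      ∑ i, (A (0, EuclideanSpace.single i 1)).2 i := by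
  classical
  set b := PiLp.basisFun 2 ℝ (Fin n) with hb
  rw [LinearMap.trace_eq_matrix_trace ℝ (b.prod b)]
  rw [Matrix.trace]
  rw [Fintype.sum_sum_type]
  have hbl : ∀ i : Fin n, b.prod b (Sum.inl i) = (EuclideanSpace.single i 1, 0) := by
    intro i
    ext1
    · rw [Module.Basis.prod_apply_inl_fst, hb, PiLp.basisFun_apply]
    · rw [Module.Basis.prod_apply_inl_snd]
  have hbr : ∀ i : Fin n, b.prod b (Sum.inr i) = (0, EuclideanSpace.single i 1) := by
    intro i
    ext1
    · rw [Module.Basis.prod_apply_inr_fst]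
    · rw [Module.Basis.prod_apply_inr_snd, hb, PiLp.basisFun_apply]
  congr 1
  · apply Finset.sum_congr rfl
    intro i _
    rw [Matrix.diag_apply, LinearMap.toMatrix_apply, hbl i, Module.Basis.prod_repr_inl,
      PiLp.basisFun_repr]
  · apply Finset.sum_congr rfl
    intro i _
    rw [Matrix.diag_apply, LinearMap.toMatrix_apply, hbr i, Module.Basis.prod_repr_inr,
      PiLp.basisFun_repr]

/-- If `i_X Ω = N dH` with `N > 0` on `ℝ^{2n}`, then the volume form
`μ = N⁻¹ Ωⁿ` is invariant: `£_X μ = 0`.  Since `Ωⁿ` is a constant multiple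
of the standard volume form, this is the statement
`d(N⁻¹)(X) + N⁻¹ · div X = 0`, where `div X = tr(DX)`. -/
theorem conformal_hamiltonian_preserves_measure {n : ℕ}
    (X : EuclideanSpace ℝ (Fin n) × EuclideanSpace ℝ (Fin n) →
      EuclideanSpace ℝ (Fin n) × EuclideanSpace ℝ (Fin n))
    (H N : EuclideanSpace ℝ (Fin n) × EuclideanSpace ℝ (Fin n) → ℝ)
    (hX : ContDiff ℝ (⊤ : ℕ∞) X) (hH : ContDiff ℝ (⊤ : ℕ∞) H) (hN : ContDiff ℝ (⊤ : ℕ∞) N)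
    (hNpos : ∀ z, 0 < N z)
    (hconf : ∀ z v, OmegaForm (X z) v = N z * fderiv ℝ H z v) :
    ∀ z, fderiv ℝ (fun w => (N w)⁻¹) z (X z) +
      (N z)⁻¹ * LinearMap.trace ℝ _ ((fderiv ℝ X z : _ →L[ℝ] _) :
        (EuclideanSpace ℝ (Fin n) × EuclideanSpace ℝ (Fin n)) →ₗ[ℝ]
        (EuclideanSpace ℝ (Fin n) × EuclideanSpace ℝ (Fin n))) = 0 := by
  intro z
  classical
  have hNz : N z ≠ 0 := ne_of_gt (hNpos z)
  set B := fderiv ℝ N z with hB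
  set Hd := fderiv ℝ H z with hHd
  set H2 := fderiv ℝ (fderiv ℝ H) z with hH2
  set D := fderiv ℝ X z with hD
  set e : Fin n → EuclideanSpace ℝ (Fin n) := fun i => EuclideanSpace.single i 1 with he
  -- symmetry of second derivative
  have hs : ∀ w v, H2 w v = H2 v w := fun w v =>
    (hH.contDiffAt.isSymmSndFDerivAt (by rw [minSmoothness_of_isRCLikeNormedField]; exact WithTop.coe_le_coe.mpr le_top)) w v
  -- inner products with basis vectors
  have hinner : ∀ (u : EuclideanSpace ℝ (Fin n)) i, ⟪u, e i⟫ = u i := by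
    intro u i
    rw [he]
    have := EuclideanSpace.inner_single_right (𝕜 := ℝ) i 1 u
    simpa using this
  -- OmegaForm against basis covectors
  have hOm1 : ∀ (u : EuclideanSpace ℝ (Fin n) × EuclideanSpace ℝ (Fin n)) i,
      OmegaForm u (0, e i) = u.1 i := by
    intro u i
    simp [OmegaForm, hinner]
  have hOm2 : ∀ (u : EuclideanSpace ℝ (Fin n) × EuclideanSpace ℝ (Fin n)) i,
      OmegaForm u (e i, 0) = -(u.2 i) := by
    intro u i
    simp [OmegaForm, hinner]
  -- components of X
  have hX1 : ∀ i, (X z).1 i = N z * Hd (0, e i) := by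
    intro i
    rw [← hOm1 (X z) i, hconf z (0, e i), hHd]
  have hX2 : ∀ i, (X z).2 i = -(N z * Hd (e i, 0)) := by
    intro i
    have := hconf z (e i, 0)
    rw [hOm2 (X z) i] at this
    rw [← hHd] at this
    linarith [this]
  -- the divergence-type sum
  set S : ℝ := ∑ i, (Hd (0, e i) * B (e i, 0) - Hd (e i, 0) * B (0, e i)) with hS
  -- trace computation
  have htr : LinearMap.trace ℝ _ ((D : _ →L[ℝ] _) :
      (EuclideanSpace ℝ (Fin n) × EuclideanSpace ℝ (Fin n)) →ₗ[ℝ]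
      (EuclideanSpace ℝ (Fin n) × EuclideanSpace ℝ (Fin n))) = S := by
    rw [trace_formula]
    have dia : ∀ i, (D (e i, (0 : EuclideanSpace ℝ (Fin n)))).1 i =
        N z * H2 (e i, 0) (0, e i) + Hd (0, e i) * B (e i, 0) := by
      intro i
      have h := omega_key X H N hX hH hN hconf z (e i, (0 : EuclideanSpace ℝ (Fin n))) (0, e i)
      rw [hOm1] at h
      rw [← hD, ← hH2, ← hHd, ← hB] at h
      exact h
    have dib : ∀ i, (D ((0 : EuclideanSpace ℝ (Fin n)), e i)).2 i =
        -(N z * H2 (0, e i) (e i, 0) + Hd (e i, 0) * B (0, e i)) := by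
      intro i
      have h := omega_key X H N hX hH hN hconf z ((0 : EuclideanSpace ℝ (Fin n)), e i) (e i, 0)
      rw [hOm2] at h
      rw [← hD, ← hH2, ← hHd, ← hB] at h
      linarith [h]
    show (∑ i, (D (e i, (0 : EuclideanSpace ℝ (Fin n)))).1 i) +
        ∑ i, (D ((0 : EuclideanSpace ℝ (Fin n)), e i)).2 i = S
    rw [← Finset.sum_add_distrib, hS]
    apply Finset.sum_congr rfl
    intro i _
    rw [dia i, dib i, hs (e i, 0) (0, e i)]
    ring
  -- decomposition of a linear functional over the basis
  have hdecomp : ∀ (φ : (EuclideanSpace ℝ (Fin n)) →L[ℝ] ℝ) (u : EuclideanSpace ℝ (Fin n)),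
      φ u = ∑ i, u i * φ (e i) := by
    intro φ u
    have hb : ∀ i, (PiLp.basisFun 2 ℝ (Fin n)) i = e i := by
      intro i; rw [PiLp.basisFun_apply]
    have hu : u = ∑ i, u i • e i := by
      conv_lhs => rw [← (PiLp.basisFun 2 ℝ (Fin n)).sum_repr u]
      apply Finset.sum_congr rfl
      intro i _
      rw [PiLp.basisFun_repr, hb]
    conv_lhs => rw [hu]
    rw [map_sum]
    apply Finset.sum_congr rfl
    intro i _
    rw [φ.map_smul, smul_eq_mul]
  -- value of B on X z
  have hBX : B (X z) = N z * S := by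
    have hsplit : X z = ((X z).1, (0 : EuclideanSpace ℝ (Fin n))) +
        ((0 : EuclideanSpace ℝ (Fin n)), (X z).2) := by
      ext1 <;> simp
    rw [hsplit, map_add]
    have h1 : B ((X z).1, (0 : EuclideanSpace ℝ (Fin n))) =
        ∑ i, (X z).1 i * B (e i, 0) := by
      have := hdecomp (B.comp (ContinuousLinearMap.inl ℝ _ _)) (X z).1
      simpa using this
    have h2 : B ((0 : EuclideanSpace ℝ (Fin n)), (X z).2) =
        ∑ i, (X z).2 i * B (0, e i) := by
      have := hdecomp (B.comp (ContinuousLinearMap.inr ℝ _ _)) (X z).2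
      simp at this
      exact this
    rw [h1, h2, hS, Finset.mul_sum, ← Finset.sum_add_distrib]
    apply Finset.sum_congr rfl
    intro i _
    rw [hX1 i, hX2 i]
    ring
  -- derivative of N⁻¹
  have hNinv : HasFDerivAt (fun w => (N w)⁻¹) ((-(N z ^ 2)⁻¹) • B) z := by
    have h1 : HasDerivAt (fun y : ℝ => y⁻¹) (-((N z) ^ 2)⁻¹) (N z) := hasDerivAt_inv hNz
    have h2 : HasFDerivAt N B z := (hN.differentiable (by simp) z).hasFDerivAt
    exact h1.comp_hasFDerivAt z h2
  rw [hNinv.fderiv, htr]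
  rw [ContinuousLinearMap.smul_apply, hBX]
  field_simp
  have hNN : N z ^ 2 * (N z)⁻¹ ^ 2 = 1 := by rw [← mul_pow, mul_inv_cancel₀ hNz, one_pow]
  linear_combination (-S) * hNN
end

section
/- Suppose a Lie group G acts on a symplectic manifold (P, Ω) with momentum map J : P → g* satisfying dJ_ξ = i_{ξ_P} Ω for all ξ in the Lie algebra g, and H is G-invariant. If X = N·X_H is a conformally Hamiltonian vector field with positive conformal factor N, then J_ξ is constant along the flow of X for every ξ ∈ g. -/
open scoped RealInnerProductSpace

/-- Noether's theorem for conformally Hamiltonian systems.  Let `ξP` be the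
infinitesimal generator of a symmetry with momentum function `Jξ`
(`dJξ = i_{ξP} Ω`), and let `H` be invariant under the symmetry
(`dH(ξP) = 0`, i.e. infinitesimal `G`-invariance).  If `X = N • X_H` is
conformally Hamiltonian with positive conformal factor `N`, then `Jξ` is
constant along the flow of `X`: `dJξ(X) = 0`. -/
theorem noether_conformal_hamiltonian {n : ℕ}
    (ξP XH X : EuclideanSpace ℝ (Fin n) × EuclideanSpace ℝ (Fin n) →
      EuclideanSpace ℝ (Fin n) × EuclideanSpace ℝ (Fin n))
    (H N Jξ : EuclideanSpace ℝ (Fin n) × EuclideanSpace ℝ (Fin n) → ℝ)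
    (hξP : ContDiff ℝ (⊤ : ℕ∞) ξP) (hH : ContDiff ℝ (⊤ : ℕ∞) H) (hN : ContDiff ℝ (⊤ : ℕ∞) N)
    (hJ : ContDiff ℝ (⊤ : ℕ∞) Jξ)
    (hNpos : ∀ z, 0 < N z)
    (hmom : ∀ z v, fderiv ℝ Jξ z v = OmegaForm (ξP z) v)
    (hHam : ∀ z v, OmegaForm (XH z) v = fderiv ℝ H z v)
    (hinv : ∀ z, fderiv ℝ H z (ξP z) = 0)
    (hX : ∀ z, X z = N z • XH z) :
    ∀ z, fderiv ℝ Jξ z (X z) = 0 := by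
  intro z
  have h1 : OmegaForm (XH z) (ξP z) = 0 := by rw [hHam]; exact hinv z
  rw [hmom, hX]
  have h2 : OmegaForm (ξP z) (N z • XH z) = -(N z * OmegaForm (XH z) (ξP z)) := by
    simp only [OmegaForm, Prod.smul_fst, Prod.smul_snd, real_inner_smul_right,
      real_inner_smul_left]
    rw [real_inner_comm (ξP z).1, real_inner_comm (ξP z).2]
    ring
  rw [h2, h1]; ring
end

section
/- For the nonholonomic particle with Lagrangian L(x,y,ẋ,ẏ) = ½((1+y²)ẋ² + ẏ²) − U(x,y), the gyroscopic force F(x,y,ẋ,ẏ) = (yẋẏ, −yẋ²) can be written in φ-simple form F = ⟨∂L/∂q̇, q̇⟩ ∂φ/∂q − ⟨∂φ/∂q, q̇⟩ ∂L/∂q̇ with φ(x,y) = −½ ln(1+y²). -/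
lemma deriv_philog (y : ℝ) :
    deriv (fun s : ℝ => -(1 / 2) * Real.log (1 + s ^ 2)) y = -y / (1 + y ^ 2) := by
  have hpos : (1 : ℝ) + y ^ 2 > 0 := by positivity
  have h1 : HasDerivAt (fun s : ℝ => 1 + s ^ 2) (2 * y) y := by
    simpa using ((hasDerivAt_pow 2 y).const_add 1)
  have h2 : HasDerivAt (fun s : ℝ => Real.log (1 + s ^ 2)) (2 * y / (1 + y ^ 2)) y :=
    h1.log hpos.ne'
  have h3 := h2.const_mul (-(1 / 2) : ℝ)
  have := h3.deriv
  rw [this]; field_simp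

/-- For the nonholonomic particle with Lagrangian
`L = ½((1+y²)ẋ² + ẏ²) − U(x,y)` the gyroscopic force
`F = (y ẋ ẏ, −y ẋ²)` is φ-simple:
`F = ⟨∂L/∂q̇, q̇⟩ ∂φ/∂q − ⟨∂φ/∂q, q̇⟩ ∂L/∂q̇` with
`φ(x,y) = −½ ln(1+y²)` (so `∂φ/∂x = 0`), where
`∂L/∂q̇ = ((1+y²)ẋ, ẏ)`. -/
theorem nonholonomic_particle_phi_simple :
    ∀ x y vx vy : ℝ,
      ((y * vx * vy, -(y * vx ^ 2)) : ℝ × ℝ) =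
        (((1 + y ^ 2) * vx * vx + vy * vy) •
          ((deriv (fun _ : ℝ => -(1 / 2) * Real.log (1 + y ^ 2)) x,
            deriv (fun s : ℝ => -(1 / 2) * Real.log (1 + s ^ 2)) y) : ℝ × ℝ))
        - ((deriv (fun _ : ℝ => -(1 / 2) * Real.log (1 + y ^ 2)) x * vx +
            deriv (fun s : ℝ => -(1 / 2) * Real.log (1 + s ^ 2)) y * vy) •
          (((1 + y ^ 2) * vx, vy) : ℝ × ℝ)) := by
  intro x y vx vy
  have hpos : (1 : ℝ) + y ^ 2 > 0 := by positivity
  rw [deriv_const, deriv_philog]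
  ext <;> simp <;> field_simp <;> ring
end

section
/- The reduced equations of the nonholonomic particle, (1+y²)ẍ = −yẏẋ − ∂U/∂x and ÿ = −∂U/∂y, are equivalent, via the substitutions p_x = (1+y²)ẋ/√(1+y²), p_y = ẏ/√(1+y²), to the conformally Hamiltonian system ẋ = N ∂H/∂p_x, ẏ = N ∂H/∂p_y, ṗ_x = −N ∂H/∂x, ṗ_y = −N ∂H/∂y, with H(x,y,p_x,p_y) = ½(p_x² + (1+y²)p_y²) + U(x,y) and N(y) = 1/√(1+y²). -/
/-- The reduced equations of the nonholonomic particle,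
`(1+y²)ẍ = −yẏẋ − ∂U/∂x` and `ÿ = −∂U/∂y`, are equivalent, via the
substitutions `p_x = √(1+y²)·ẋ` and `p_y = ẏ/√(1+y²)`, to the conformally
Hamiltonian system with `H = ½(p_x² + (1+y²)p_y²) + U(x,y)` and
`N(y) = 1/√(1+y²)`. -/
theorem nonholonomic_particle_hamiltonization (U : ℝ × ℝ → ℝ)
    (hU : ContDiff ℝ (⊤ : ℕ∞) U)
    (x y : ℝ → ℝ) (hx : ContDiff ℝ (⊤ : ℕ∞) x) (hy : ContDiff ℝ (⊤ : ℕ∞) y) :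
    (∀ t, (1 + y t ^ 2) * deriv (deriv x) t =
        -(y t * deriv y t * deriv x t) - fderiv ℝ U (x t, y t) (1, 0) ∧
      deriv (deriv y) t = -fderiv ℝ U (x t, y t) (0, 1)) ↔
    (∀ t,
      deriv x t =
        (Real.sqrt (1 + y t ^ 2) * deriv x t) / Real.sqrt (1 + y t ^ 2) ∧
      deriv y t =
        Real.sqrt (1 + y t ^ 2) * (deriv y t / Real.sqrt (1 + y t ^ 2)) ∧
      deriv (fun s => Real.sqrt (1 + y s ^ 2) * deriv x s) t =
        -(1 / Real.sqrt (1 + y t ^ 2)) * fderiv ℝ U (x t, y t) (1, 0) ∧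
      deriv (fun s => deriv y s / Real.sqrt (1 + y s ^ 2)) t =
        -(1 / Real.sqrt (1 + y t ^ 2)) *
          (y t * (deriv y t / Real.sqrt (1 + y t ^ 2)) ^ 2 +
            fderiv ℝ U (x t, y t) (0, 1))) := by
  have hx' : Differentiable ℝ (deriv x) :=
    ((contDiff_infty_iff_deriv.mp (hx.of_le (by simp))).2).differentiable (by simp)
  have hy' : Differentiable ℝ (deriv y) :=
    ((contDiff_infty_iff_deriv.mp (hy.of_le (by simp))).2).differentiable (by simp)
  have hσpos : ∀ t, 0 < Real.sqrt (1 + y t ^ 2) := fun t => Real.sqrt_pos.mpr (by positivity)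
  have hσ2 : ∀ t, Real.sqrt (1 + y t ^ 2) ^ 2 = 1 + y t ^ 2 :=
    fun t => Real.sq_sqrt (by positivity)
  have hσ : ∀ t, HasDerivAt (fun s => Real.sqrt (1 + y s ^ 2))
      (y t * deriv y t / Real.sqrt (1 + y t ^ 2)) t := by
    intro t
    have h1 : HasDerivAt (fun s => 1 + y s ^ 2) (2 * y t * deriv y t) t := by
      have h := ((hy.differentiable (by simp) t).hasDerivAt.fun_pow 2).const_add 1
      exact h.congr_deriv (by rw [show (2:ℕ) - 1 = 1 from rfl]; push_cast; ring)
    have h2 := h1.sqrt (by positivity)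
    convert h2 using 1
    field_simp
  have hpx : ∀ t, deriv (fun s => Real.sqrt (1 + y s ^ 2) * deriv x s) t
      = y t * deriv y t / Real.sqrt (1 + y t ^ 2) * deriv x t
        + Real.sqrt (1 + y t ^ 2) * deriv (deriv x) t := by
    intro t
    exact ((hσ t).mul (hx' t).hasDerivAt).deriv
  have hpy : ∀ t, deriv (fun s => deriv y s / Real.sqrt (1 + y s ^ 2)) t
      = (deriv (deriv y) t * Real.sqrt (1 + y t ^ 2)
          - deriv y t * (y t * deriv y t / Real.sqrt (1 + y t ^ 2)))
        / Real.sqrt (1 + y t ^ 2) ^ 2 := by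
    intro t
    exact (((hy' t).hasDerivAt).div (hσ t) (hσpos t).ne').deriv
  constructor
  · intro H t
    obtain ⟨h1, h2⟩ := H t
    have hσne : Real.sqrt (1 + y t ^ 2) ≠ 0 := (hσpos t).ne'
    refine ⟨by field_simp, by field_simp, ?_, ?_⟩
    · rw [hpx t]
      field_simp
      linear_combination h1 + deriv (deriv x) t * hσ2 t
    · rw [hpy t, h2]
      field_simp
      linear_combination
  · intro H t
    obtain ⟨_, _, h3, h4⟩ := H t
    have hσne : Real.sqrt (1 + y t ^ 2) ≠ 0 := (hσpos t).ne'
    rw [hpx t] at h3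
    rw [hpy t] at h4
    have h2 : deriv (deriv y) t = -fderiv ℝ U (x t, y t) (0, 1) := by
      field_simp at h4
      have key : (deriv (deriv y) t + fderiv ℝ U (x t, y t) (0, 1)) * (1 + y t ^ 2) = 0 := by
        linear_combination h4 - deriv (deriv y) t * hσ2 t - (fderiv ℝ U (x t, y t)) (0, 1) * hσ2 t
      have hne : (1 + y t ^ 2) ≠ 0 := by positivity
      have := (mul_eq_zero.mp key).resolve_right hne
      linarith
    refine ⟨?_, h2⟩
    field_simp at h3
    linear_combination h3 - deriv (deriv x) t * hσ2 t
end

section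
/- Consider a φ-simple Chaplygin system with hyper-regular reduced Lagrangian L on TQ, Hamiltonian 𝓗 on T*Q its Legendre transform, and force F(q,q̇) = ⟨∂L/∂q̇, q̇⟩ ∂φ/∂q − ⟨∂φ/∂q, q̇⟩ ∂L/∂q̇ for φ ∈ C^∞(Q). Then under the rescaling p = e^{φ(q)} m, H(q,p) = 𝓗(q, e^{−φ(q)} p), the forced Euler–Lagrange equations d/dt(∂L/∂q̇) − ∂L/∂q = F are equivalent to the conformally Hamiltonian system q̇ = N(q) ∂H/∂p, ṗ = −N(q) ∂H/∂q with conformal factor N(q) = e^{φ(q)}. -/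
open scoped RealInnerProductSpace

/-- Partial gradient with respect to the first variable. -/
noncomputable def pgrad1 {n : ℕ}
    (f : EuclideanSpace ℝ (Fin n) × EuclideanSpace ℝ (Fin n) → ℝ)
    (z : EuclideanSpace ℝ (Fin n) × EuclideanSpace ℝ (Fin n)) :
    EuclideanSpace ℝ (Fin n) :=
  gradient (fun a => f (a, z.2)) z.1

/-- Partial gradient with respect to the second variable. -/
noncomputable def pgrad2 {n : ℕ}
    (f : EuclideanSpace ℝ (Fin n) × EuclideanSpace ℝ (Fin n) → ℝ)
    (z : EuclideanSpace ℝ (Fin n) × EuclideanSpace ℝ (Fin n)) :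
    EuclideanSpace ℝ (Fin n) :=
  gradient (fun b => f (z.1, b)) z.2

section Aux
variable {n : ℕ}
local notation "E" => EuclideanSpace ℝ (Fin n)

lemma inner_gradient_eq (f : E → ℝ) (x h : E) :
    ⟪gradient f x, h⟫ = fderiv ℝ f x h := by
  simp only [gradient]
  exact InnerProductSpace.toDual_symm_apply

lemma gradient_eq_of (f : E → ℝ) {A : E →L[ℝ] ℝ} {g x : E}
    (hf : HasFDerivAt f A x) (hA : ∀ h, A h = ⟪g, h⟫) : gradient f x = g := by
  have hg : HasGradientAt f g x := by
    rw [hasGradientAt_iff_hasFDerivAt]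
    have hAe : A = InnerProductSpace.toDual ℝ E g := by
      ext h
      simp [hA h]
    rwa [← hAe]
  exact hg.gradient

lemma fderiv_eq_pgrad {f : E × E → ℝ} (hf : Differentiable ℝ f)
    (z h : E × E) :
    fderiv ℝ f z h = ⟪pgrad1 f z, h.1⟫ + ⟪pgrad2 f z, h.2⟫ := by
  have h1 : HasFDerivAt (fun a : E => f (a, z.2))
      ((fderiv ℝ f z).comp ((ContinuousLinearMap.id ℝ E).prod 0)) z.1 :=
    (hf z).hasFDerivAt.comp z.1 (HasFDerivAt.prodMk (hasFDerivAt_id z.1) (hasFDerivAt_const z.2 z.1))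
  have h2 : HasFDerivAt (fun b : E => f (z.1, b))
      ((fderiv ℝ f z).comp ((0 : E →L[ℝ] E).prod (ContinuousLinearMap.id ℝ E))) z.2 :=
    (hf z).hasFDerivAt.comp z.2 (HasFDerivAt.prodMk (hasFDerivAt_const z.1 z.2) (hasFDerivAt_id z.2))
  have e1 : ⟪pgrad1 f z, h.1⟫ = fderiv ℝ f z (h.1, 0) := by
    rw [pgrad1, inner_gradient_eq, h1.fderiv]
    simp
  have e2 : ⟪pgrad2 f z, h.2⟫ = fderiv ℝ f z (0, h.2) := by
    rw [pgrad2, inner_gradient_eq, h2.fderiv]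
    simp
  rw [e1, e2, ← map_add]
  congr
  simp [Prod.ext_iff]

lemma smul_iff_aux (e : ℝ) (he : e ≠ 0) (a b c d : E) :
    (e • (a + b) = -e • (-c - d)) ↔ (b - d = c - a) := by
  constructor
  · intro h
    have h2 : a + b = c + d := smul_right_injective E he (by show e • (a + b) = e • (c + d); rw [h]; module)
    have hb : b = c + d - a := by rw [← h2]; abel
    rw [hb]; abel
  · intro h
    have hb : b = c - a + d := by rw [← h]; abel
    rw [hb]; module

end Aux

section Main
variable {n : ℕ}
local notation "E" => EuclideanSpace ℝ (Fin n)

theorem main_aux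
    (L : E × E → ℝ) (φ : E → ℝ)
    (hL : ContDiff ℝ (⊤ : ℕ∞) L) (hφ : ContDiff ℝ (⊤ : ℕ∞) φ)
    (V : E × E → E) (hV : ContDiff ℝ (⊤ : ℕ∞) V)
    (hLeg1 : ∀ q v, V (q, pgrad2 L (q, v)) = v)
    (hLeg2 : ∀ q m, pgrad2 L (q, V (q, m)) = m)
    (q : ℝ → E) (hq : ContDiff ℝ (⊤ : ℕ∞) q) :
    ((∀ t, deriv (fun t => pgrad2 L (q t, deriv q t)) t - pgrad1 L (q t, deriv q t) =
        ⟪pgrad2 L (q t, deriv q t), deriv q t⟫ • gradient φ (q t) -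
          ⟪gradient φ (q t), deriv q t⟫ • pgrad2 L (q t, deriv q t)) ↔
      (∀ t, deriv q t = Real.exp (φ (q t)) •
            pgrad2 (fun z : E × E =>
              ⟪Real.exp (-(φ z.1)) • z.2, V (z.1, Real.exp (-(φ z.1)) • z.2)⟫ -
                L (z.1, V (z.1, Real.exp (-(φ z.1)) • z.2)))
              (q t, Real.exp (φ (q t)) • pgrad2 L (q t, deriv q t)) ∧
        deriv (fun t => Real.exp (φ (q t)) • pgrad2 L (q t, deriv q t)) t =
          -(Real.exp (φ (q t))) •
            pgrad1 (fun z : E × E =>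
              ⟪Real.exp (-(φ z.1)) • z.2, V (z.1, Real.exp (-(φ z.1)) • z.2)⟫ -
                L (z.1, V (z.1, Real.exp (-(φ z.1)) • z.2)))
              (q t, Real.exp (φ (q t)) • pgrad2 L (q t, deriv q t)))) := by
  have hLd : Differentiable ℝ L := hL.differentiable (by simp)
  have hVd : Differentiable ℝ V := hV.differentiable (by simp)
  have hφd : Differentiable ℝ φ := hφ.differentiable (by simp)
  have hqd : Differentiable ℝ q := hq.differentiable (by simp)
  -- smoothness of the reduced Hamiltonian
  have hHcd : ContDiff ℝ (⊤ : ℕ∞) (fun w : E × E => (⟪w.2, V w⟫ - L (w.1, V w) : ℝ)) :=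
    (contDiff_snd.inner ℝ hV).sub (hL.comp (contDiff_fst.prodMk hV))
  have hHfd : ∀ z : E × E, HasFDerivAt (fun w : E × E => (⟪w.2, V w⟫ - L (w.1, V w) : ℝ))
      (fderiv ℝ (fun w : E × E => (⟪w.2, V w⟫ - L (w.1, V w) : ℝ)) z) z :=
    fun z => (hHcd.differentiable (by simp) z).hasFDerivAt
  -- the derivative of the reduced Hamiltonian
  have hHapp : ∀ (z h : E × E),
      fderiv ℝ (fun w : E × E => (⟪w.2, V w⟫ - L (w.1, V w) : ℝ)) z h =
        ⟪V z, h.2⟫ - ⟪pgrad1 L (z.1, V z), h.1⟫ := by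
    intro z h
    have hVz : HasFDerivAt V (fderiv ℝ V z) z := (hVd z).hasFDerivAt
    have h1 : HasFDerivAt (fun w : E × E => (⟪w.2, V w⟫ : ℝ))
        ((fderivInnerCLM ℝ (z.2, V z)).comp
          ((ContinuousLinearMap.snd ℝ E E).prod (fderiv ℝ V z))) z :=
      HasFDerivAt.inner ℝ hasFDerivAt_snd hVz
    have h2 : HasFDerivAt (fun w : E × E => L (w.1, V w))
        ((fderiv ℝ L (z.1, V z)).comp
          ((ContinuousLinearMap.fst ℝ E E).prod (fderiv ℝ V z))) z :=
      (hLd (z.1, V z)).hasFDerivAt.comp z (HasFDerivAt.prodMk hasFDerivAt_fst hVz)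
    have h3 : HasFDerivAt (fun w : E × E => (⟪w.2, V w⟫ - L (w.1, V w) : ℝ))
        ((fderivInnerCLM ℝ (z.2, V z)).comp
            ((ContinuousLinearMap.snd ℝ E E).prod (fderiv ℝ V z)) -
          (fderiv ℝ L (z.1, V z)).comp
            ((ContinuousLinearMap.fst ℝ E E).prod (fderiv ℝ V z))) z := h1.sub h2
    rw [h3.fderiv]
    have hd : fderiv ℝ L (z.1, V z) (h.1, fderiv ℝ V z h) =
        ⟪pgrad1 L (z.1, V z), h.1⟫ + ⟪z.2, fderiv ℝ V z h⟫ := by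
      rw [fderiv_eq_pgrad hLd]
      rw [show pgrad2 L (z.1, V z) = z.2 from hLeg2 z.1 z.2]
    simp only [ContinuousLinearMap.sub_apply, ContinuousLinearMap.comp_apply,
      ContinuousLinearMap.prod_apply, fderivInnerCLM_apply, ContinuousLinearMap.coe_fst',
      ContinuousLinearMap.coe_snd', hd]
    rw [real_inner_comm (V z) h.2]
    ring
  -- gradient of H in the momentum variable
  have hgrad2H : ∀ Q P : E,
      pgrad2 (fun z : E × E =>
          ⟪Real.exp (-(φ z.1)) • z.2, V (z.1, Real.exp (-(φ z.1)) • z.2)⟫ -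
            L (z.1, V (z.1, Real.exp (-(φ z.1)) • z.2))) (Q, P) =
        Real.exp (-(φ Q)) • V (Q, Real.exp (-(φ Q)) • P) := by
    intro Q P
    have hmap : HasFDerivAt (fun b : E => ((Q, Real.exp (-(φ Q)) • b) : E × E))
        ((0 : E →L[ℝ] E).prod (Real.exp (-(φ Q)) • ContinuousLinearMap.id ℝ E)) P :=
      HasFDerivAt.prodMk (hasFDerivAt_const Q P) ((hasFDerivAt_id P).const_smul (Real.exp (-(φ Q))))
    have hcomp := (hHfd (Q, Real.exp (-(φ Q)) • P)).comp P hmap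
    refine gradient_eq_of _ hcomp ?_
    intro h
    rw [ContinuousLinearMap.comp_apply, hHapp]
    simp only [ContinuousLinearMap.prod_apply, ContinuousLinearMap.zero_apply,
      ContinuousLinearMap.smul_apply, ContinuousLinearMap.coe_id', id_eq,
      inner_zero_right, sub_zero, real_inner_smul_left, real_inner_smul_right]
  -- gradient of H in the position variable
  have hgrad1H : ∀ Q P : E,
      pgrad1 (fun z : E × E =>
          ⟪Real.exp (-(φ z.1)) • z.2, V (z.1, Real.exp (-(φ z.1)) • z.2)⟫ -
            L (z.1, V (z.1, Real.exp (-(φ z.1)) • z.2))) (Q, P) =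
        -((Real.exp (-(φ Q)) * ⟪V (Q, Real.exp (-(φ Q)) • P), P⟫) • gradient φ Q) -
          pgrad1 L (Q, V (Q, Real.exp (-(φ Q)) • P)) := by
    intro Q P
    have hφQ : HasFDerivAt φ (fderiv ℝ φ Q) Q := (hφd Q).hasFDerivAt
    have hexp : HasFDerivAt (fun a : E => Real.exp (-(φ a)))
        (Real.exp (-(φ Q)) • -(fderiv ℝ φ Q)) Q := hφQ.neg.exp
    have hmap : HasFDerivAt (fun a : E => ((a, Real.exp (-(φ a)) • P) : E × E))
        ((ContinuousLinearMap.id ℝ E).prod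
          ((Real.exp (-(φ Q)) • -(fderiv ℝ φ Q)).smulRight P)) Q :=
      HasFDerivAt.prodMk (hasFDerivAt_id Q) (hexp.smul_const P)
    have hcomp := (hHfd (Q, Real.exp (-(φ Q)) • P)).comp Q hmap
    refine gradient_eq_of _ hcomp ?_
    intro h
    rw [ContinuousLinearMap.comp_apply, hHapp]
    simp only [ContinuousLinearMap.prod_apply, ContinuousLinearMap.smulRight_apply,
      ContinuousLinearMap.smul_apply, ContinuousLinearMap.neg_apply,
      ContinuousLinearMap.coe_id', id_eq]
    rw [inner_sub_left, inner_neg_left, real_inner_smul_left, real_inner_smul_right,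
      ← inner_gradient_eq φ Q h]
    simp only [smul_eq_mul]
    ring
  -- smoothness of the momentum
  have hq' : ContDiff ℝ (⊤ : ℕ∞) (deriv q) := by
    have h1 : ContDiff ℝ (⊤ : ℕ∞) (fderiv ℝ q) := hq.fderiv_right (by simp)
    exact h1.clm_apply contDiff_const
  have hLfd : ContDiff ℝ (⊤ : ℕ∞) (fderiv ℝ L) := hL.fderiv_right (by simp)
  have hpg2L : ContDiff ℝ (⊤ : ℕ∞) (fun z : E × E => pgrad2 L z) := by
    have heq : (fun z : E × E => pgrad2 L z) = fun z : E × E =>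
        (InnerProductSpace.toDual ℝ E).symm ((ContinuousLinearMap.compL ℝ E (E × E) ℝ).flip
          ((0 : E →L[ℝ] E).prod (ContinuousLinearMap.id ℝ E)) (fderiv ℝ L z)) := by
      funext z
      have h2 : HasFDerivAt (fun b : E => L (z.1, b))
          ((fderiv ℝ L z).comp ((0 : E →L[ℝ] E).prod (ContinuousLinearMap.id ℝ E))) z.2 :=
        (hLd z).hasFDerivAt.comp z.2 (HasFDerivAt.prodMk (hasFDerivAt_const z.1 z.2) (hasFDerivAt_id z.2))
      rw [pgrad2, gradient, h2.fderiv]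
      rfl
    rw [heq]
    exact ((InnerProductSpace.toDual ℝ E).symm.contDiff).comp
      ((((ContinuousLinearMap.compL ℝ E (E × E) ℝ).flip
        ((0 : E →L[ℝ] E).prod (ContinuousLinearMap.id ℝ E))).contDiff).comp hLfd)
  have hmC : ContDiff ℝ (⊤ : ℕ∞) (fun t => pgrad2 L (q t, deriv q t)) :=
    hpg2L.comp (ContDiff.prodMk hq hq')
  have hmd : ∀ t, HasDerivAt (fun t => pgrad2 L (q t, deriv q t))
      (deriv (fun t => pgrad2 L (q t, deriv q t)) t) t :=
    fun t => ((hmC.differentiable (by simp)) t).hasDerivAt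
  have hφqd : ∀ t, HasDerivAt (fun t => Real.exp (φ (q t)))
      (Real.exp (φ (q t)) * ⟪gradient φ (q t), deriv q t⟫) t := by
    intro t
    have h1 : HasDerivAt (fun t => φ (q t)) (fderiv ℝ φ (q t) (deriv q t)) t :=
      (hφd (q t)).hasFDerivAt.comp_hasDerivAt t (hqd t).hasDerivAt
    have h2 := h1.exp
    rwa [← inner_gradient_eq] at h2
  have hpderiv : ∀ t, deriv (fun t => Real.exp (φ (q t)) • pgrad2 L (q t, deriv q t)) t =
      Real.exp (φ (q t)) • (⟪gradient φ (q t), deriv q t⟫ • pgrad2 L (q t, deriv q t) +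
        deriv (fun t => pgrad2 L (q t, deriv q t)) t) := by
    intro t
    have h2 : HasDerivAt (fun t => Real.exp (φ (q t)) • pgrad2 L (q t, deriv q t))
        (Real.exp (φ (q t)) • deriv (fun t => pgrad2 L (q t, deriv q t)) t +
          (Real.exp (φ (q t)) * ⟪gradient φ (q t), deriv q t⟫) • pgrad2 L (q t, deriv q t)) t :=
      (hφqd t).smul (hmd t)
    rw [h2.deriv, smul_add, smul_smul]
    abel
  have hMP : ∀ t, Real.exp (-(φ (q t))) • Real.exp (φ (q t)) • pgrad2 L (q t, deriv q t) =
      pgrad2 L (q t, deriv q t) := by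
    intro t
    rw [smul_smul, ← Real.exp_add, neg_add_cancel, Real.exp_zero, one_smul]
  have hfirst : ∀ t, deriv q t = Real.exp (φ (q t)) •
      pgrad2 (fun z : E × E =>
          ⟪Real.exp (-(φ z.1)) • z.2, V (z.1, Real.exp (-(φ z.1)) • z.2)⟫ -
            L (z.1, V (z.1, Real.exp (-(φ z.1)) • z.2)))
        (q t, Real.exp (φ (q t)) • pgrad2 L (q t, deriv q t)) := by
    intro t
    rw [hgrad2H, hMP t, hLeg1, smul_smul, ← Real.exp_add, add_neg_cancel,
      Real.exp_zero, one_smul]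
  have key : ∀ t,
      (deriv (fun t => Real.exp (φ (q t)) • pgrad2 L (q t, deriv q t)) t =
        -(Real.exp (φ (q t))) •
          pgrad1 (fun z : E × E =>
              ⟪Real.exp (-(φ z.1)) • z.2, V (z.1, Real.exp (-(φ z.1)) • z.2)⟫ -
                L (z.1, V (z.1, Real.exp (-(φ z.1)) • z.2)))
            (q t, Real.exp (φ (q t)) • pgrad2 L (q t, deriv q t))) ↔
      (deriv (fun t => pgrad2 L (q t, deriv q t)) t - pgrad1 L (q t, deriv q t) =
        ⟪pgrad2 L (q t, deriv q t), deriv q t⟫ • gradient φ (q t) -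
          ⟪gradient φ (q t), deriv q t⟫ • pgrad2 L (q t, deriv q t)) := by
    intro t
    rw [hpderiv t, hgrad1H, hMP t, hLeg1, real_inner_smul_right, ← mul_assoc,
      ← Real.exp_add, neg_add_cancel, Real.exp_zero, one_mul,
      smul_iff_aux (Real.exp (φ (q t))) (Real.exp_ne_zero _),
      real_inner_comm (deriv q t) (pgrad2 L (q t, deriv q t))]
  constructor
  · intro hEL t
    exact ⟨hfirst t, (key t).mpr (hEL t)⟩
  · intro hHam t
    exact (key t).mp (hHam t).2

end Main

/-- For a φ-simple Chaplygin system with hyper-regular reduced Lagrangian `L`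
(with Legendre inverse `V`, so `m = ∂L/∂q̇ ↔ q̇ = V(q,m)`), Hamiltonian
`𝓗(q,m) = ⟨m, V(q,m)⟩ − L(q,V(q,m))` and φ-simple force
`F = ⟨∂L/∂q̇, q̇⟩ ∇φ − ⟨∇φ, q̇⟩ ∂L/∂q̇`, the forced Euler–Lagrange equations
`d/dt(∂L/∂q̇) − ∂L/∂q = F` are equivalent, under the rescaling
`p = e^{φ(q)} m`, `H(q,p) = 𝓗(q, e^{−φ(q)} p)`, to the conformally
Hamiltonian system `q̇ = N(q) ∂H/∂p`, `ṗ = −N(q) ∂H/∂q` with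
`N(q) = e^{φ(q)}`. -/
theorem phi_simple_hamiltonization {n : ℕ}
    (L : EuclideanSpace ℝ (Fin n) × EuclideanSpace ℝ (Fin n) → ℝ)
    (φ : EuclideanSpace ℝ (Fin n) → ℝ)
    (hL : ContDiff ℝ (⊤ : ℕ∞) L) (hφ : ContDiff ℝ (⊤ : ℕ∞) φ)
    (V : EuclideanSpace ℝ (Fin n) × EuclideanSpace ℝ (Fin n) →
      EuclideanSpace ℝ (Fin n))
    (hV : ContDiff ℝ (⊤ : ℕ∞) V)
    (hLeg1 : ∀ q v, V (q, pgrad2 L (q, v)) = v)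
    (hLeg2 : ∀ q m, pgrad2 L (q, V (q, m)) = m)
    (q : ℝ → EuclideanSpace ℝ (Fin n)) (hq : ContDiff ℝ (⊤ : ℕ∞) q) :
    letI Hcal : EuclideanSpace ℝ (Fin n) × EuclideanSpace ℝ (Fin n) → ℝ :=
      fun z => ⟪z.2, V z⟫ - L (z.1, V z)
    letI H : EuclideanSpace ℝ (Fin n) × EuclideanSpace ℝ (Fin n) → ℝ :=
      fun z => Hcal (z.1, Real.exp (-(φ z.1)) • z.2)
    letI F : EuclideanSpace ℝ (Fin n) × EuclideanSpace ℝ (Fin n) →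
        EuclideanSpace ℝ (Fin n) :=
      fun z => ⟪pgrad2 L z, z.2⟫ • gradient φ z.1 -
        ⟪gradient φ z.1, z.2⟫ • pgrad2 L z
    letI m : ℝ → EuclideanSpace ℝ (Fin n) :=
      fun t => pgrad2 L (q t, deriv q t)
    letI p : ℝ → EuclideanSpace ℝ (Fin n) :=
      fun t => Real.exp (φ (q t)) • m t
    ((∀ t, deriv m t - pgrad1 L (q t, deriv q t) = F (q t, deriv q t)) ↔
      (∀ t, deriv q t = Real.exp (φ (q t)) • pgrad2 H (q t, p t) ∧
        deriv p t = -(Real.exp (φ (q t))) • pgrad1 H (q t, p t))) := by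
  exact main_aux L φ hL hφ V hV hLeg1 hLeg2 q hq
end

section
/- For the free nonholonomic particle (U ≡ 0) with equations ẋ = p_x/√(1+y²), ẏ = √(1+y²)p_y, ṗ_x = 0, ṗ_y = −y p_y²/√(1+y²), along any solution with p_y(0) ≠ 0 the quantity (1+y(t)²) tends to infinity as t → ∞; equivalently the conformal factor N(y(t)) = 1/√(1+y(t)²) tends to 0. -/
/-!
The momentum `√(1 + y²) p_y` is a first integral of the system, so `ẏ = √(1 + y²) p_y` is a
nonzero constant when `p_y(0) ≠ 0`. Hence `y` is affine with nonzero slope and `y(t)² → ∞`.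
-/

open Filter Real

theorem HasDerivAt.sqrt_one_add_sq {f : ℝ → ℝ} {f' t : ℝ} (hf : HasDerivAt f f' t) :
    HasDerivAt (fun s => √(1 + f s ^ 2)) (f t * f' / √(1 + f t ^ 2)) t := by
  refine (((hf.fun_pow 2).const_add 1).sqrt (by positivity)).congr_deriv ?_
  have : √(1 + f t ^ 2) ≠ 0 := by positivity
  field_simp
  norm_num
  ring

theorem eq_add_mul_of_deriv_eq_const {f : ℝ → ℝ} {c : ℝ} (hf : Differentiable ℝ f)
    (hf' : ∀ t, deriv f t = c) (t : ℝ) : f t = f 0 + c * t := by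
  have hg : ∀ s, HasDerivAt (fun s => f s - c * s) 0 s := fun s =>
    ((hf s).hasDerivAt.fun_sub ((hasDerivAt_id' s).const_mul c)).congr_deriv (by rw [hf']; ring)
  have := is_const_of_deriv_eq_zero (fun s => (hg s).differentiableAt) (fun s => (hg s).deriv) t 0
  simp only [mul_zero, sub_zero] at this
  linarith

theorem tendsto_add_mul_sq_atTop {a c : ℝ} (hc : c ≠ 0) :
    Tendsto (fun t => (a + c * t) ^ 2) atTop atTop := by
  wlog hc_pos : 0 < c generalizing a c
  · have hc_neg : c < 0 := hc.lt_or_gt.resolve_right hc_pos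
    exact (this (a := -a) (neg_ne_zero.2 hc) (neg_pos.2 hc_neg)).congr fun t => by ring
  exact (tendsto_pow_atTop two_ne_zero).comp <|
    tendsto_atTop_add_const_left _ a (tendsto_id.const_mul_atTop hc_pos)

theorem sqrt_one_add_sq_mul_eq_of_deriv_eq {y p : ℝ → ℝ} (hy : Differentiable ℝ y)
    (hp : Differentiable ℝ p) (hy' : ∀ t, deriv y t = √(1 + y t ^ 2) * p t)
    (hp' : ∀ t, deriv p t = -(y t * p t ^ 2) / √(1 + y t ^ 2)) (t : ℝ) :
    √(1 + y t ^ 2) * p t = √(1 + y 0 ^ 2) * p 0 := by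
  have hmom : ∀ s, HasDerivAt (fun s => √(1 + y s ^ 2) * p s) 0 s := fun s => by
    refine ((hy s).hasDerivAt.sqrt_one_add_sq.mul (hp s).hasDerivAt).congr_deriv ?_
    have : √(1 + y s ^ 2) ≠ 0 := by positivity
    rw [hy', hp']
    field_simp
    ring
  exact is_const_of_deriv_eq_zero (fun s => (hmom s).differentiableAt)
    (fun s => (hmom s).deriv) t 0

theorem free_nonholonomic_particle_conformal_factor_vanishes_general
    (y py : ℝ → ℝ)
    (hy : Differentiable ℝ y)
    (hpy : Differentiable ℝ py)
    (h2 : ∀ t, deriv y t = Real.sqrt (1 + y t ^ 2) * py t)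
    (h4 : ∀ t, deriv py t = -(y t * py t ^ 2) / Real.sqrt (1 + y t ^ 2))
    (h0 : py 0 ≠ 0) :
    Filter.Tendsto (fun t => 1 + y t ^ 2) Filter.atTop Filter.atTop ∧
    Filter.Tendsto (fun t => 1 / Real.sqrt (1 + y t ^ 2))
      Filter.atTop (nhds 0) := by
  set c := √(1 + y 0 ^ 2) * py 0
  have hc : c ≠ 0 := mul_ne_zero (by positivity) h0
  have hy_affine : ∀ t, y t = y 0 + c * t := eq_add_mul_of_deriv_eq_const hy fun t => by
    rw [h2, sqrt_one_add_sq_mul_eq_of_deriv_eq hy hpy h2 h4]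
  have hsq : Tendsto (fun t => 1 + y t ^ 2) atTop atTop :=
    tendsto_atTop_add_const_left _ 1 <|
      (tendsto_add_mul_sq_atTop hc).congr fun t => by rw [← hy_affine t]
  refine ⟨hsq, ?_⟩
  simp only [one_div]
  exact (tendsto_sqrt_atTop.comp hsq).inv_tendsto_atTop

/-- For the free nonholonomic particle (`U ≡ 0`), along any solution with
`p_y(0) ≠ 0` the quantity `1 + y(t)²` tends to infinity as `t → ∞`;
equivalently the conformal factor `N(y(t)) = 1/√(1 + y(t)²)` tends to `0`. -/
theorem free_nonholonomic_particle_conformal_factor_vanishes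
    (x y px py : ℝ → ℝ)
    (hx : Differentiable ℝ x) (hy : Differentiable ℝ y)
    (hpx : Differentiable ℝ px) (hpy : Differentiable ℝ py)
    (h1 : ∀ t, deriv x t = px t / Real.sqrt (1 + y t ^ 2))
    (h2 : ∀ t, deriv y t = Real.sqrt (1 + y t ^ 2) * py t)
    (h3 : ∀ t, deriv px t = 0)
    (h4 : ∀ t, deriv py t = -(y t * py t ^ 2) / Real.sqrt (1 + y t ^ 2))
    (h0 : py 0 ≠ 0) :
    Filter.Tendsto (fun t => 1 + y t ^ 2) Filter.atTop Filter.atTop ∧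
    Filter.Tendsto (fun t => 1 / Real.sqrt (1 + y t ^ 2))
      Filter.atTop (nhds 0) :=
  free_nonholonomic_particle_conformal_factor_vanishes_general y py hy hpy h2 h4 h0
end
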